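/- Let 0 < s < 1. There exists a constant C > 0 such that for all integers k, l ≥ 2 one has μ_{k,l} ≤ C · (k+l)^{1/4+s} / (l^{1/4} · k^{5/4+s}). -/

import Mathlib

open Real MeasureTheory Finset

/-- The coefficients `μ_{k,l}` in the expansion `Γ(φ_k, φ_l) = μ_{k,l} φ_{k+l}` of the
radially symmetric non-cutoff Boltzmann collision operator, for the model angular kernel
`β(θ) = (sin θ)^{-1-2s} cos θ`. -/
noncomputable def boltzMu (s : ℝ) (k l : ℕ) : ℝ :=
  Real.sqrt ((Nat.factorial (2 * k + 2 * l + 1) : ℝ) /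
      ((Nat.factorial (2 * k + 1) : ℝ) * (Nat.factorial (2 * l + 1) : ℝ))) *
    ∫ θ in (0:ℝ)..(Real.pi / 4),
      Real.sin θ ^ (2 * (k : ℝ) - 1 - 2 * s) * Real.cos θ ^ (2 * l + 1)

open Nat

/-!
The substitution `u = sin² θ` turns the integral in `μ_{k,l}` into
`½ ∫₀^{1/2} u^{k-1-s} (1-u)^l du`, at most half the Beta integral `B(k-s, l+1)`. By Hölder's
inequality `B(·, l+1)` is log-convex, so interpolating between the integer points `k-1` and `k`
gives `B(k-s, l+1) ≤ B(k-1, l+1)^s B(k, l+1)^{1-s} = ((k+l)/(k-1))^s B(k, l+1)`. What remains is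
the purely combinatorial factor `√((2k+2l+1)!/((2k+1)!(2l+1)!)) · B(k, l+1)`: writing
`(2n+1)! = (2n+1) C(2n,n) (n!)²`, it is controlled by the Wallis-type bounds
`n 16ⁿ ≤ ((2n+1) C(2n,n))² ≤ (2n+1) 16ⁿ`.
-/

theorem integral_rpow_mul_rpow_le {α : Type*} [MeasurableSpace α] {μ : Measure α} {f g : α → ℝ}
    (hf₀ : 0 ≤ᵐ[μ] f) (hg₀ : 0 ≤ᵐ[μ] g) (hf : Integrable f μ) (hg : Integrable g μ)
    {p q : ℝ} (hp : 0 ≤ p) (hq : 0 ≤ q) (hpq : p + q = 1) :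
    ∫ a, f a ^ p * g a ^ q ∂μ ≤ (∫ a, f a ∂μ) ^ p * (∫ a, g a ∂μ) ^ q := by
  have hfg₀ : 0 ≤ᵐ[μ] fun a ↦ f a ^ p * g a ^ q := by
    filter_upwards [hf₀, hg₀] with a hfa hga
    exact mul_nonneg (rpow_nonneg hfa p) (rpow_nonneg hga q)
  have hfg : AEStronglyMeasurable (fun a ↦ f a ^ p * g a ^ q) μ :=
    ((hf.aemeasurable.pow_const p).mul (hg.aemeasurable.pow_const q)).aestronglyMeasurable
  have hofReal : (fun a ↦ ENNReal.ofReal (f a ^ p * g a ^ q)) =ᵐ[μ]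
      fun a ↦ ENNReal.ofReal (f a) ^ p * ENNReal.ofReal (g a) ^ q := by
    filter_upwards [hf₀, hg₀] with a hfa hga
    rw [ENNReal.ofReal_mul (rpow_nonneg hfa p), ENNReal.ofReal_rpow_of_nonneg hfa hp,
      ENNReal.ofReal_rpow_of_nonneg hga hq]
  rw [integral_eq_lintegral_of_nonneg_ae hfg₀ hfg, integral_eq_lintegral_of_nonneg_ae hf₀ hf.1,
    integral_eq_lintegral_of_nonneg_ae hg₀ hg.1, ENNReal.toReal_rpow, ENNReal.toReal_rpow,
    ← ENNReal.toReal_mul, lintegral_congr_ae hofReal]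
  refine ENNReal.toReal_mono ?_ (ENNReal.lintegral_mul_norm_pow_le
    hf.1.aemeasurable.ennreal_ofReal hg.1.aemeasurable.ennreal_ofReal hp hq hpq)
  exact ENNReal.mul_ne_top (ENNReal.rpow_ne_top_of_nonneg hp hf.lintegral_lt_top.ne)
    (ENNReal.rpow_ne_top_of_nonneg hq hg.lintegral_lt_top.ne)

theorem integral_pow_mul_one_sub_pow (a b : ℕ) :
    ∫ x in (0:ℝ)..1, x ^ a * (1 - x) ^ b = (a ! * b ! : ℝ) / (a + b + 1)! := by
  induction b generalizing a with
  | zero =>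
    simp only [pow_zero, mul_one, integral_pow, one_pow, add_zero, factorial_succ a]
    rw [zero_pow a.succ_ne_zero]
    push_cast
    field_simp
    simp
  | succ b ih =>
    have hsplit : ∀ x : ℝ,
        x ^ a * (1 - x) ^ (b + 1) = x ^ a * (1 - x) ^ b - x ^ (a + 1) * (1 - x) ^ b :=
      fun x ↦ by ring
    simp_rw [hsplit]
    rw [intervalIntegral.integral_sub (Continuous.intervalIntegrable (by fun_prop) _ _)
      (Continuous.intervalIntegrable (by fun_prop) _ _), ih, ih,
      show a + 1 + b + 1 = a + b + 1 + 1 by ring, show a + (b + 1) + 1 = a + b + 1 + 1 by ring,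
      factorial_succ (a + b + 1), factorial_succ a, factorial_succ b]
    push_cast
    field_simp
    ring

theorem integral_rpow_mul_one_sub_pow_le {s a b : ℝ} (hs₀ : 0 ≤ s) (hs₁ : s ≤ 1) (ha : 0 ≤ a)
    (hb : 0 ≤ b) (n : ℕ) :
    ∫ u in (0:ℝ)..1, u ^ (s * a + (1 - s) * b) * (1 - u) ^ n
      ≤ (∫ u in (0:ℝ)..1, u ^ a * (1 - u) ^ n) ^ s
        * (∫ u in (0:ℝ)..1, u ^ b * (1 - u) ^ n) ^ (1 - s) := by
  have hmem : ∀ u ∈ Set.Ioc (0:ℝ) 1, 0 ≤ u ∧ 0 ≤ 1 - u :=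
    fun u hu ↦ ⟨hu.1.le, sub_nonneg.2 hu.2⟩
  have hnonneg : ∀ c : ℝ,
      0 ≤ᵐ[volume.restrict (Set.Ioc 0 1)] fun u : ℝ ↦ u ^ c * (1 - u) ^ n :=
    fun c ↦ ae_restrict_of_forall_mem measurableSet_Ioc fun u hu ↦
      mul_nonneg (rpow_nonneg (hmem u hu).1 c) (pow_nonneg (hmem u hu).2 n)
  have hint : ∀ c : ℝ, 0 ≤ c →
      IntegrableOn (fun u : ℝ ↦ u ^ c * (1 - u) ^ n) (Set.Ioc 0 1) := by
    intro c hc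
    have := continuous_rpow_const hc
    exact (Continuous.integrableOn_Icc (by fun_prop)).mono_set Set.Ioc_subset_Icc_self
  have hpow : ∀ u ∈ Set.Ioc (0:ℝ) 1,
      (u ^ a * (1 - u) ^ n) ^ s * (u ^ b * (1 - u) ^ n) ^ (1 - s)
        = u ^ (s * a + (1 - s) * b) * (1 - u) ^ n := by
    intro u hu
    obtain ⟨hu₀, hu₁⟩ := hmem u hu
    have hv : ((1 - u) ^ n) ^ s * ((1 - u) ^ n) ^ (1 - s) = (1 - u) ^ n := by
      rw [← rpow_add_of_nonneg (pow_nonneg hu₁ n) hs₀ (sub_nonneg.2 hs₁), add_sub_cancel,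
        rpow_one]
    rw [mul_rpow (rpow_nonneg hu₀ a) (pow_nonneg hu₁ n),
      mul_rpow (rpow_nonneg hu₀ b) (pow_nonneg hu₁ n), ← rpow_mul hu₀, ← rpow_mul hu₀,
      rpow_add_of_nonneg hu₀ (by positivity) (mul_nonneg (sub_nonneg.2 hs₁) hb),
      mul_comm a, mul_comm b]
    linear_combination u ^ (s * a) * u ^ ((1 - s) * b) * hv
  simp only [intervalIntegral.integral_of_le zero_le_one]
  rw [← setIntegral_congr_fun measurableSet_Ioc hpow]
  exact integral_rpow_mul_rpow_le (hnonneg a) (hnonneg b) (hint a ha) (hint b hb) hs₀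
    (sub_nonneg.2 hs₁) (add_sub_cancel s 1)

theorem integral_rpow_mul_one_sub_pow_le_rpow_mul {s : ℝ} (hs₀ : 0 ≤ s) (hs₁ : s ≤ 1)
    (j n : ℕ) :
    ∫ u in (0:ℝ)..1, u ^ ((j : ℝ) + 1 - s) * (1 - u) ^ n
      ≤ (((j : ℝ) + n + 2) / (j + 1)) ^ s * ((j + 1)! * n ! / (j + n + 2)!) := by
  have hbeta : ∀ i : ℕ,
      ∫ u in (0:ℝ)..1, u ^ (i : ℝ) * (1 - u) ^ n = (i ! * n ! : ℝ) / (i + n + 1)! := by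
    simpa only [rpow_natCast] using (integral_pow_mul_one_sub_pow · n)
  have hinterp := integral_rpow_mul_one_sub_pow_le hs₀ hs₁ (a := j) (b := (j + 1 : ℕ))
    (by positivity) (by positivity) n
  rw [hbeta, hbeta, show s * j + (1 - s) * (j + 1 : ℕ) = (j : ℝ) + 1 - s by push_cast; ring]
    at hinterp
  refine hinterp.trans_eq ?_
  set B : ℝ := (j + 1)! * n ! / (j + n + 2)!
  have hB : (j ! * n ! : ℝ) / (j + n + 1)! = ((j + n + 2) / (j + 1)) * B := by
    simp only [B, factorial_succ (j + n + 1), factorial_succ j]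
    push_cast
    field_simp
    ring
  rw [hB, show j + 1 + n + 1 = j + n + 2 by ring, mul_rpow (by positivity) (by positivity),
    mul_assoc, ← rpow_add_of_nonneg (by positivity) hs₀ (sub_nonneg.2 hs₁), add_sub_cancel,
    rpow_one]

theorem integral_sin_rpow_mul_cos_pow {c b : ℝ} (hc : 0 ≤ c) (hb₀ : 0 ≤ b) (hbπ : b ≤ π)
    (n : ℕ) :
    ∫ θ in (0:ℝ)..b, sin θ ^ (2 * c + 1) * cos θ ^ (2 * n + 1)
      = 1 / 2 * ∫ u in (0:ℝ)..(sin b ^ 2), u ^ c * (1 - u) ^ n := by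
  have hderiv : ∀ θ ∈ Set.uIcc 0 b,
      HasDerivAt (fun θ ↦ sin θ ^ 2) (2 * sin θ * cos θ) θ := fun θ _ ↦ by
    simpa [mul_comm, mul_assoc] using (hasDerivAt_sin θ).fun_pow 2
  have hg : Continuous fun u : ℝ ↦ 1 / 2 * (u ^ c * (1 - u) ^ n) := by
    have := continuous_rpow_const hc
    fun_prop
  have hsubst := intervalIntegral.integral_comp_mul_deriv hderiv (by fun_prop) hg
  rw [sin_zero, zero_pow two_ne_zero] at hsubst
  rw [← intervalIntegral.integral_const_mul, ← hsubst]
  refine intervalIntegral.integral_congr fun θ hθ ↦ ?_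
  rw [Set.uIcc_of_le hb₀] at hθ
  have hsin : 0 ≤ sin θ := sin_nonneg_of_nonneg_of_le_pi hθ.1 (hθ.2.trans hbπ)
  simp only [Function.comp, ← cos_sq']
  rw [rpow_add_one' hsin (by positivity), rpow_mul hsin, rpow_two]
  ring

namespace Nat

theorem succ_sq_mul_centralBinom_succ_sq (n : ℕ) :
    (n + 1) ^ 2 * centralBinom (n + 1) ^ 2 = 4 * (2 * n + 1) ^ 2 * centralBinom n ^ 2 := by
  rw [← mul_pow, succ_mul_centralBinom_succ]
  ring

theorem centralBinom_sq_mul_le (n : ℕ) : centralBinom n ^ 2 * (2 * n + 1) ≤ 16 ^ n := by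
  induction n with
  | zero => simp
  | succ n ih =>
    refine Nat.le_of_mul_le_mul_left ?_ (by positivity : 0 < (n + 1) ^ 2)
    calc (n + 1) ^ 2 * (centralBinom (n + 1) ^ 2 * (2 * (n + 1) + 1))
        = 4 * ((2 * n + 1) * (2 * n + 3)) * (centralBinom n ^ 2 * (2 * n + 1)) := by
          rw [← mul_assoc, succ_sq_mul_centralBinom_succ_sq]; ring
      _ ≤ 4 * (4 * (n + 1) ^ 2) * 16 ^ n := by
          gcongr 4 * ?_ * ?_
          nlinarith
      _ = (n + 1) ^ 2 * 16 ^ (n + 1) := by ring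

theorem sixteen_pow_le_four_mul_centralBinom_sq_mul {n : ℕ} (hn : 1 ≤ n) :
    16 ^ n ≤ 4 * centralBinom n ^ 2 * n := by
  induction n, hn using Nat.le_induction with
  | base => decide
  | succ n _ ih =>
    refine Nat.le_of_mul_le_mul_left ?_ (by positivity : 0 < (n + 1) ^ 2)
    calc (n + 1) ^ 2 * 16 ^ (n + 1) = 16 * (n + 1) ^ 2 * 16 ^ n := by ring
      _ ≤ 16 * (n + 1) ^ 2 * (4 * centralBinom n ^ 2 * n) := by gcongr
      _ = 4 * centralBinom n ^ 2 * (4 * (n + 1) * (4 * n * (n + 1))) := by ring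
      _ ≤ 4 * centralBinom n ^ 2 * (4 * (n + 1) * (2 * n + 1) ^ 2) := by gcongr; nlinarith
      _ = (n + 1) ^ 2 * (4 * centralBinom (n + 1) ^ 2 * (n + 1)) := by
          rw [show (n + 1) ^ 2 * (4 * centralBinom (n + 1) ^ 2 * (n + 1))
            = 4 * (n + 1) * ((n + 1) ^ 2 * centralBinom (n + 1) ^ 2) by ring,
            succ_sq_mul_centralBinom_succ_sq]
          ring

theorem factorial_two_mul_add_one (n : ℕ) :
    (2 * n + 1)! = (2 * n + 1) * centralBinom n * n ! ^ 2 := by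
  rw [factorial_succ, two_mul, ← add_choose_mul_factorial_mul_factorial,
    centralBinom_eq_two_mul_choose, two_mul]
  ring

end Nat

theorem factorial_ratio_mul_sq_eq {k : ℕ} (hk : 1 ≤ k) (l : ℕ) :
    ((2 * k + 2 * l + 1)! / ((2 * k + 1)! * (2 * l + 1)!) : ℝ)
        * ((k - 1)! * l ! / (k + l)! : ℝ) ^ 2
      = (2 * (k + l) + 1) * centralBinom (k + l)
        / ((2 * k + 1) * centralBinom k * ((2 * l + 1) * centralBinom l) * k ^ 2) := by
  have hk! : (k ! : ℝ) = k * (k - 1)! := by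
    exact_mod_cast (mul_factorial_pred (by omega)).symm
  have hk₀ : (k : ℝ) ≠ 0 := by positivity
  rw [show 2 * k + 2 * l + 1 = 2 * (k + l) + 1 by ring]
  simp only [factorial_two_mul_add_one]
  push_cast
  rw [hk!]
  field_simp

theorem factorial_ratio_mul_sq_sq_le {k l : ℕ} (hk : 1 ≤ k) (hl : 1 ≤ l) :
    (((2 * k + 2 * l + 1)! / ((2 * k + 1)! * (2 * l + 1)!) : ℝ)
        * ((k - 1)! * l ! / (k + l)! : ℝ) ^ 2) ^ 2 ≤ 3 * (k + l) / (l * k ^ 5) := by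
  have hupper : ∀ n : ℕ, ((2 * n + 1) * centralBinom n : ℝ) ^ 2 ≤ (2 * n + 1) * 16 ^ n := by
    intro n
    exact_mod_cast (by nlinarith [centralBinom_sq_mul_le n] :
      ((2 * n + 1) * centralBinom n) ^ 2 ≤ (2 * n + 1) * 16 ^ n)
  have hlower : ∀ n : ℕ, 1 ≤ n →
      (n * 16 ^ n : ℝ) ≤ ((2 * n + 1) * centralBinom n : ℝ) ^ 2 := by
    intro n hn
    exact_mod_cast (by nlinarith [sixteen_pow_le_four_mul_centralBinom_sq_mul hn] :
      n * 16 ^ n ≤ ((2 * n + 1) * centralBinom n) ^ 2)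
  rw [factorial_ratio_mul_sq_eq hk, div_pow]
  calc _ ≤ (2 * (k + l) + 1) * 16 ^ (k + l)
          / ((k * 16 ^ k) * (l * 16 ^ l) * (k ^ 2) ^ 2 : ℝ) := by
        gcongr ?_ / ?_
        · exact_mod_cast hupper (k + l)
        · rw [mul_pow, mul_pow]
          gcongr
          exacts [hlower k hk, hlower l hl]
    _ = (2 * (k + l) + 1) / (l * k ^ 5) := by
        rw [pow_add]
        field_simp
    _ ≤ 3 * (k + l) / (l * k ^ 5) := by
        gcongr
        linarith [(by exact_mod_cast hk : (1 : ℝ) ≤ k)]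

theorem sqrt_factorial_ratio_mul_le {k l : ℕ} (hk : 1 ≤ k) (hl : 1 ≤ l) :
    √((2 * k + 2 * l + 1)! / ((2 * k + 1)! * (2 * l + 1)!) : ℝ)
        * ((k - 1)! * l ! / (k + l)! : ℝ) ≤ 2 * ((k + l) / (l * k ^ 5) : ℝ) ^ (1 / 4 : ℝ) := by
  have hx : (0 : ℝ) ≤ (k + l) / (l * k ^ 5) := by positivity
  rw [← pow_le_pow_iff_left₀ (by positivity) (by positivity) four_ne_zero]
  calc _ = (((2 * k + 2 * l + 1)! / ((2 * k + 1)! * (2 * l + 1)!) : ℝ)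
          * ((k - 1)! * l ! / (k + l)! : ℝ) ^ 2) ^ 2 := by
        rw [mul_pow, show 4 = 2 * 2 by rfl, pow_mul, sq_sqrt (by positivity)]
        ring
    _ ≤ 3 * (k + l) / (l * k ^ 5) := factorial_ratio_mul_sq_sq_le hk hl
    _ ≤ 16 * ((k + l) / (l * k ^ 5)) := by rw [← mul_div_assoc]; gcongr; norm_num
    _ = _ := by
        rw [mul_pow, ← rpow_natCast (_ ^ _) 4, ← rpow_mul hx]
        norm_num

theorem integral_sin_rpow_mul_cos_pow_le {s : ℝ} (hs₀ : 0 ≤ s) (hs₁ : s ≤ 1) {k : ℕ}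
    (hk : 2 ≤ k) (l : ℕ) :
    ∫ θ in (0:ℝ)..(π / 4), sin θ ^ (2 * (k : ℝ) - 1 - 2 * s) * cos θ ^ (2 * l + 1)
      ≤ (((k : ℝ) + l) / k) ^ s * ((k - 1)! * l ! / (k + l)!) := by
  obtain ⟨j, rfl⟩ : ∃ j, k = j + 2 := ⟨k - 2, by omega⟩
  rw [show j + 2 - 1 = j + 1 by omega, show j + 2 + l = j + l + 2 by ring]
  push_cast
  have hj : (0 : ℝ) ≤ j := j.cast_nonneg
  have hc : 0 ≤ (j : ℝ) + 1 - s := by linarith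
  have hcont : Continuous fun u : ℝ ↦ u ^ ((j : ℝ) + 1 - s) * (1 - u) ^ l := by
    have := continuous_rpow_const hc
    fun_prop
  have hsin : sin (π / 4) ^ 2 = 1 / 2 := by
    rw [sin_pi_div_four, div_pow, sq_sqrt zero_le_two]
    norm_num
  have hratio : (((j : ℝ) + l + 2) / (j + 1)) ^ s ≤ 2 * (((j : ℝ) + 2 + l) / (j + 2)) ^ s :=
    calc (((j : ℝ) + l + 2) / (j + 1)) ^ s ≤ (2 * (((j : ℝ) + 2 + l) / (j + 2))) ^ s := by
          gcongr
          rw [div_le_iff₀ (by positivity)]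
          field_simp
          nlinarith [l.cast_nonneg (α := ℝ)]
      _ ≤ 2 * (((j : ℝ) + 2 + l) / (j + 2)) ^ s := by
          rw [mul_rpow zero_le_two (by positivity)]
          gcongr
          exact rpow_le_self_of_one_le one_le_two hs₁
  rw [show 2 * ((j : ℝ) + 2) - 1 - 2 * s = 2 * ((j : ℝ) + 1 - s) + 1 by ring,
    integral_sin_rpow_mul_cos_pow hc (by positivity) (by linarith [pi_pos]), hsin]
  calc 1 / 2 * ∫ u in (0:ℝ)..(1 / 2), u ^ ((j : ℝ) + 1 - s) * (1 - u) ^ l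
      ≤ 1 / 2 * ∫ u in (0:ℝ)..1, u ^ ((j : ℝ) + 1 - s) * (1 - u) ^ l := by
        gcongr
        refine intervalIntegral.integral_mono_interval le_rfl (by norm_num) (by norm_num) ?_
          (hcont.intervalIntegrable _ _)
        exact ae_restrict_of_forall_mem measurableSet_Ioc fun u hu ↦
          mul_nonneg (rpow_nonneg hu.1.le _) (pow_nonneg (sub_nonneg.2 hu.2) l)
    _ ≤ 1 / 2 * ((((j : ℝ) + l + 2) / (j + 1)) ^ s * ((j + 1)! * l ! / (j + l + 2)!)) := by
        gcongr
        exact integral_rpow_mul_one_sub_pow_le_rpow_mul hs₀ hs₁ j l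
    _ ≤ _ := by
        nlinarith [hratio, (by positivity : (0 : ℝ) ≤ (j + 1)! * l ! / (j + l + 2)!)]

theorem boltzMu_le (s : ℝ) (hs : 0 < s) (hs1 : s < 1) :
    ∃ C > 0, ∀ k l : ℕ, 2 ≤ k → 2 ≤ l →
      boltzMu s k l ≤
        C * ((k : ℝ) + (l : ℝ)) ^ ((1:ℝ)/4 + s) /
          ((l : ℝ) ^ ((1:ℝ)/4) * (k : ℝ) ^ ((5:ℝ)/4 + s)) := by
  refine ⟨2, two_pos, fun k l hk hl ↦ ?_⟩
  have hk₀ : (0 : ℝ) < k := by positivity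
  have hl₀ : (0 : ℝ) < l := by positivity
  calc boltzMu s k l
      ≤ √((2 * k + 2 * l + 1)! / ((2 * k + 1)! * (2 * l + 1)!) : ℝ)
          * ((((k : ℝ) + l) / k) ^ s * ((k - 1)! * l ! / (k + l)!)) :=
        mul_le_mul_of_nonneg_left (integral_sin_rpow_mul_cos_pow_le hs.le hs1.le hk l)
          (sqrt_nonneg _)
    _ = (((k : ℝ) + l) / k) ^ s * (√((2 * k + 2 * l + 1)! / ((2 * k + 1)! * (2 * l + 1)!) : ℝ)
          * ((k - 1)! * l ! / (k + l)!)) := by ring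
    _ ≤ (((k : ℝ) + l) / k) ^ s * (2 * ((k + l) / (l * k ^ 5) : ℝ) ^ (1 / 4 : ℝ)) :=
        mul_le_mul_of_nonneg_left (sqrt_factorial_ratio_mul_le (by omega) (by omega))
          (by positivity)
    _ = _ := by
        rw [div_rpow (by positivity) hk₀.le, div_rpow (by positivity) (by positivity),
          mul_rpow hl₀.le (by positivity), ← rpow_natCast (k : ℝ) 5, ← rpow_mul hk₀.le,
          rpow_add (by positivity), rpow_add hk₀]
        field_simp
        norm_num
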